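/- Let 𝒜, ℱ, 𝒢 be σ-algebras (𝒜 on X; ℱ, 𝒢 on U) with 𝒜 and ℱ ∩ 𝒢 countably generated, and suppose (𝒜 ⊗ ℱ) ∩ (𝒜 ⊗ 𝒢) is countably generated and its atoms are all singletons. Assume further that countably generated σ-algebras on X × U contained in a common analytic standard Borel structure with the same atoms are equal (Blackwell–Mackey property). Then (𝒜 ⊗ ℱ) ∩ (𝒜 ⊗ 𝒢) = 𝒜 ⊗ (ℱ ∩ 𝒢). -/

import Mathlib

open MeasureTheory

/-- An atom of a σ-algebra: a nonempty measurable set whose only measurable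
subsets are `∅` and itself. -/
def IsMeasurableAtom {X : Type*} (m : MeasurableSpace X) (A : Set X) : Prop :=
  A.Nonempty ∧ MeasurableSet[m] A ∧
    ∀ s : Set X, MeasurableSet[m] s → s ⊆ A → s = ∅ ∨ s = A

/-!
Both σ-algebras are countably generated, so by the Blackwell–Mackey hypothesis it suffices
that both have exactly the singletons as atoms. For `(𝒜 ⊗ ℱ) ⊓ (𝒜 ⊗ 𝒢)` this is the
assumption, once we know that in a countably generated space every point lies in an atom.
Then `{(x, u)}` is measurable there, so its sections `{x} ∈ 𝒜`, `{u} ∈ ℱ` and `{u} ∈ 𝒢` are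
measurable, and `{(x, u)} = {x} ×ˢ {u}` is measurable in `𝒜 ⊗ (ℱ ⊓ 𝒢)`.
-/

open MeasurableSpace

section Atoms

variable {α β : Type*}

lemma isMeasurableAtom_measurableAtom [m : MeasurableSpace α] [CountablyGenerated α] (x : α) :
    IsMeasurableAtom m (measurableAtom x) := by
  refine ⟨⟨x, mem_measurableAtom_self x⟩, measurableSet_measurableAtom x, fun s hs hsub => ?_⟩
  by_cases hx : x ∈ s
  · exact Or.inr (hsub.antisymm (measurableAtom_subset hs hx))
  · exact Or.inl (le_compl_self.1 (hsub.trans (measurableAtom_subset hs.compl hx)))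

lemma isMeasurableAtom_iff_exists_eq_singleton [m : MeasurableSpace α]
    [MeasurableSingletonClass α] {K : Set α} : IsMeasurableAtom m K ↔ ∃ p, K = {p} := by
  constructor
  · rintro ⟨⟨p, hp⟩, -, hmin⟩
    refine ⟨p, ((hmin {p} (measurableSet_singleton p) ?_).resolve_left ?_).symm⟩
    · exact Set.singleton_subset_iff.2 hp
    · exact Set.singleton_ne_empty p
  · rintro ⟨p, rfl⟩
    exact ⟨Set.singleton_nonempty p, measurableSet_singleton p,
      fun s _ hs => Set.subset_singleton_iff_eq.1 hs⟩

lemma MeasurableSingletonClass.of_isMeasurableAtom [m : MeasurableSpace α] [CountablyGenerated α]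
    (h : ∀ K, IsMeasurableAtom m K → ∃ p, K = {p}) : MeasurableSingletonClass α where
  measurableSet_singleton x := by
    obtain ⟨p, hp⟩ := h _ (isMeasurableAtom_measurableAtom x)
    have hx := mem_measurableAtom_self x
    rw [hp, Set.mem_singleton_iff] at hx
    rw [hx, ← hp]
    exact measurableSet_measurableAtom x

lemma MeasurableSet.singleton_of_singleton_prod [MeasurableSpace α] [MeasurableSpace β]
    {x : α} {y : β} (h : MeasurableSet {(x, y)}) : MeasurableSet {x} ∧ MeasurableSet {y} := by
  constructor
  · convert measurable_prodMk_right (y := y) h using 1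
    ext; simp
  · convert measurable_prodMk_left (x := x) h using 1
    ext; simp

lemma MeasurableSet.singleton_prod_inf {𝒜 : MeasurableSpace α} {ℱ 𝒢 : MeasurableSpace β}
    {x : α} {u : β} (h : MeasurableSet[𝒜.prod ℱ ⊓ 𝒜.prod 𝒢] {(x, u)}) :
    MeasurableSet[𝒜.prod (ℱ ⊓ 𝒢)] {(x, u)} := by
  obtain ⟨hℱ, h𝒢⟩ := measurableSet_inf.1 h
  obtain ⟨hx, huℱ⟩ := @MeasurableSet.singleton_of_singleton_prod _ _ 𝒜 ℱ _ _ hℱ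
  obtain ⟨-, hu𝒢⟩ := @MeasurableSet.singleton_of_singleton_prod _ _ 𝒜 𝒢 _ _ h𝒢
  rw [← Set.singleton_prod_singleton]
  exact @MeasurableSet.prod _ _ 𝒜 (ℱ ⊓ 𝒢) _ _ hx (measurableSet_inf.2 ⟨huℱ, hu𝒢⟩)

end Atoms

theorem stmt_17 (X U : Type*) (𝒜 : MeasurableSpace X) (ℱ 𝒢 : MeasurableSpace U)
    [𝒜.CountablyGenerated] [(ℱ ⊓ 𝒢).CountablyGenerated]
    [(𝒜.prod ℱ ⊓ 𝒜.prod 𝒢).CountablyGenerated]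
    (hatoms : ∀ K : Set (X × U), IsMeasurableAtom (𝒜.prod ℱ ⊓ 𝒜.prod 𝒢) K →
      ∃ p : X × U, K = {p})
    (hBM : ∀ m₁ m₂ : MeasurableSpace (X × U), m₁.CountablyGenerated →
      m₂.CountablyGenerated →
      (∀ K : Set (X × U), IsMeasurableAtom m₁ K ↔ IsMeasurableAtom m₂ K) → m₁ = m₂) :
    𝒜.prod ℱ ⊓ 𝒜.prod 𝒢 = 𝒜.prod (ℱ ⊓ 𝒢) := by
  have hcg : (𝒜.prod (ℱ ⊓ 𝒢)).CountablyGenerated :=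
    @instCountablyGeneratedProd X U 𝒜 _ (ℱ ⊓ 𝒢) _
  have h₁ : @MeasurableSingletonClass (X × U) (𝒜.prod ℱ ⊓ 𝒜.prod 𝒢) :=
    @MeasurableSingletonClass.of_isMeasurableAtom _ (𝒜.prod ℱ ⊓ 𝒜.prod 𝒢) _ hatoms
  have h₂ : @MeasurableSingletonClass (X × U) (𝒜.prod (ℱ ⊓ 𝒢)) :=
    @MeasurableSingletonClass.mk _ (𝒜.prod (ℱ ⊓ 𝒢)) fun _ =>
      (@measurableSet_singleton _ (𝒜.prod ℱ ⊓ 𝒜.prod 𝒢) h₁ _).singleton_prod_inf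
  refine hBM _ _ ‹_› hcg fun K => ?_
  rw [@isMeasurableAtom_iff_exists_eq_singleton _ (𝒜.prod ℱ ⊓ 𝒜.prod 𝒢) h₁,
    @isMeasurableAtom_iff_exists_eq_singleton _ (𝒜.prod (ℱ ⊓ 𝒢)) h₂]
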